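/- Let g satisfy (G1)–(G3), fix H with ‖H‖_{2,col} ≤ B, and let (ρ_t)_{t∈[0,1]} be Borel probability measures on ℝ^p, each supported in {β : ‖β‖ ≤ r} and C_ρ-Lipschitz in the bounded-Lipschitz norm. Let T(H,·) be the solution of d/dt T(t) = ∫ g(T(t),β) dρ_t(β), T(0) = H, and let T̃ be the explicit Euler scheme on the grid t_l = l/L: T̃(0) = H, T̃(t_{l+1}) = T̃(t_l) + (1/L)·∫ g(T̃(t_l),β) dρ_{t_l}(β). Then there exists a constant C, depending only on N, D, r, B, C_ρ and the constants in (G1)–(G3), such that max_{0≤l≤L} ‖T̃(t_l) − T(H,t_l)‖_F ≤ C/L. (In particular, the first-order Euler rate O(1/L) holds without assuming any bound on the second time-derivative of T, only the bounded-Lipschitz continuity of t ↦ ρ_t.) -/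

import Mathlib

/-!
The flow and the scheme both stay in a fixed ball `‖A‖ ≤ R`, by the linear growth (G1) and
Grönwall. On that ball the drift `F t A = ∫ g(A, β) dρ_t` is Lipschitz in `A` by (G3), and
Lipschitz in `t`: on the support ball `‖β‖ ≤ r`, `β ↦ g(A, β)` is bounded by (G1) and Lipschitz by
(G2), so its pairing with a unit vector, clamped and rescaled, is an admissible bounded-Lipschitz
test function. Hence `t ↦ F t (T t)` is Lipschitz, one Euler step makes a local error `O(1/L²)`,
and the discrete Grönwall inequality adds up `L` of them to `O(1/L)`.
-/

open MeasureTheory Set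

noncomputable section

/-- `D × (N+1)` real matrices, with the Frobenius (Euclidean) norm. -/
abbrev Mat (D N : ℕ) : Type := EuclideanSpace ℝ (Fin D × Fin (N + 1))

/-- Parameter space `ℝ^p` with the Euclidean norm. -/
abbrev Par (p : ℕ) : Type := EuclideanSpace ℝ (Fin p)

/-- The `j`-th column of a matrix, as a Euclidean vector. -/
noncomputable def matCol {D N : ℕ} (Z : Mat D N) (j : Fin (N + 1)) :
    EuclideanSpace ℝ (Fin D) :=
  (WithLp.equiv 2 (Fin D → ℝ)).symm fun i => Z (i, j)

/-- Maximum ℓ²-norm of a column: `‖Z‖_{2,col}`. -/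
noncomputable def colNorm {D N : ℕ} (Z : Mat D N) : ℝ :=
  ⨆ j : Fin (N + 1), ‖matCol Z j‖

/-- A family of measures `(ρ_t)` is `Cρ`-Lipschitz in the bounded-Lipschitz norm on `[0,1]`. -/
def BLLipschitz {α : Type*} [PseudoMetricSpace α] [MeasurableSpace α]
    (ρ : ℝ → Measure α) (Cρ : ℝ) : Prop :=
  ∀ φ : α → ℝ, (∀ x, |φ x| ≤ 1) → LipschitzWith 1 φ →
    ∀ s ∈ Icc (0 : ℝ) 1, ∀ t ∈ Icc (0 : ℝ) 1,
      |(∫ x, φ x ∂(ρ t)) - ∫ x, φ x ∂(ρ s)| ≤ Cρ * |t - s|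

/-- The explicit Euler discretization of the mean-field Transformer ODE. -/
noncomputable def eulerT {D N p : ℕ} (g : Mat D N → Par p → Mat D N)
    (ρ : ℝ → Measure (Par p)) (L : ℕ) (H : Mat D N) : ℕ → Mat D N
  | 0 => H
  | l + 1 =>
    eulerT g ρ L H l + (L : ℝ)⁻¹ • ∫ β, g (eulerT g ρ L H l) β ∂(ρ ((l : ℝ) / L))

open Real

theorem discrete_gronwall_of_lt {u : ℕ → ℝ} {c b : ℝ} {n : ℕ} (hu_nonneg : ∀ m, 0 ≤ u m)
    (hu : ∀ m < n, u (m + 1) ≤ (1 + c) * u m + b) (hc : 0 ≤ c) (hb : 0 ≤ b)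
    {m : ℕ} (hm : m ≤ n) : u m ≤ (u 0 + m * b) * exp (m * c) := by
  -- freeze the sequence at time `n` so that the recursion holds for all indices
  have hstop : ∀ k ≥ 0, u (min (k + 1) n) ≤ (1 + c) * u (min k n) + b := by
    intro k _
    rcases lt_or_ge k n with hk | hk
    · rw [min_eq_left hk, min_eq_left hk.le]; exact hu k hk
    · rw [min_eq_right hk, min_eq_right (hk.trans k.le_succ)]
      nlinarith [hu_nonneg n]
  simpa [min_eq_left hm] using
    discrete_gronwall (u := fun k => u (min k n)) (c := fun _ => c) (b := fun _ => b)
      (hu_nonneg _) hstop (fun _ _ => hc) (fun _ _ => hb) m.zero_le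

theorem natCast_div_mem_Icc {m L : ℕ} (hm : m ≤ L) : (m : ℝ) / L ∈ Icc (0 : ℝ) 1 :=
  ⟨by positivity, div_le_one_of_le₀ (by exact_mod_cast hm) L.cast_nonneg⟩

section VectorODE

variable {V : Type*} [NormedAddCommGroup V] [NormedSpace ℝ V]

theorem norm_le_exp_mul_of_hasDerivWithinAt {x f : ℝ → V} {c : ℝ}
    (hx : ∀ t ∈ Icc (0 : ℝ) 1, HasDerivWithinAt x (f t) (Icc 0 1) t)
    (hf : ∀ t ∈ Icc (0 : ℝ) 1, ‖f t‖ ≤ c * ‖x t‖) (hc : 0 ≤ c) {t : ℝ} (ht : t ∈ Icc (0 : ℝ) 1) :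
    ‖x t‖ ≤ exp c * ‖x 0‖ := by
  have hx' : ∀ t ∈ Ico (0 : ℝ) 1, HasDerivWithinAt x (f t) (Ici t) t := fun t ht =>
    (hx t (Ico_subset_Icc_self ht)).mono_of_mem_nhdsWithin
      (Icc_mem_nhdsGE_of_mem ht)
  have := norm_le_gronwallBound_of_norm_deriv_right_le (fun t ht => (hx t ht).continuousWithinAt)
    hx' le_rfl (ε := 0) (fun t ht => by simpa using hf t (Ico_subset_Icc_self ht)) t ht
  rw [sub_zero, gronwallBound_ε0] at this
  calc ‖x t‖ ≤ ‖x 0‖ * exp (c * t) := this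
    _ ≤ exp c * ‖x 0‖ := by
      rw [mul_comm]; gcongr; nlinarith [ht.2]

theorem norm_sub_sub_smul_le_of_hasDerivWithinAt {x f : ℝ → V} {a b ε : ℝ} (hab : a ≤ b)
    (hx : ∀ t ∈ Icc a b, HasDerivWithinAt x (f t) (Icc a b) t)
    (hf : ∀ t ∈ Icc a b, ‖f t - f a‖ ≤ ε) :
    ‖x b - x a - (b - a) • f a‖ ≤ ε * (b - a) := by
  have hG : ∀ t ∈ Icc a b, HasDerivWithinAt (fun t => x t - t • f a) (f t - f a) (Icc a b) t :=
    fun t ht => (hx t ht).sub (by simpa using ((hasDerivAt_id t).smul_const (f a)).hasDerivWithinAt)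
  have := (convex_Icc a b).norm_image_sub_le_of_norm_hasDerivWithin_le hG hf
    (left_mem_Icc.2 hab) (right_mem_Icc.2 hab)
  rw [Real.norm_eq_abs, abs_of_nonneg (sub_nonneg.2 hab)] at this
  convert this using 2; rw [sub_smul]; abel

theorem norm_euler_local_error_le {x f : ℝ → V} {A : ℝ} (hA : 0 ≤ A)
    (hx : ∀ t ∈ Icc (0 : ℝ) 1, HasDerivWithinAt x (f t) (Icc 0 1) t)
    (hf : ∀ s ∈ Icc (0 : ℝ) 1, ∀ t ∈ Icc (0 : ℝ) 1, ‖f t - f s‖ ≤ A * |t - s|)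
    ⦃m L : ℕ⦄ (hm : m < L) :
    ‖x ((m + 1 : ℕ) / L) - x (m / L) - (L : ℝ)⁻¹ • f (m / L)‖ ≤ A / L ^ 2 := by
  have hL : (0 : ℝ) < L := by exact_mod_cast (m.zero_le.trans_lt hm)
  have hgrid : ((m + 1 : ℕ) : ℝ) / L - m / L = (L : ℝ)⁻¹ := by field_simp; push_cast; ring
  have hsub : Icc ((m : ℝ) / L) ((m + 1 : ℕ) / L) ⊆ Icc 0 1 :=
    Icc_subset_Icc (natCast_div_mem_Icc hm.le).1 (natCast_div_mem_Icc hm).2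
  have := norm_sub_sub_smul_le_of_hasDerivWithinAt (ε := A / L)
    (by linarith [inv_nonneg.2 hL.le]) (fun t ht => (hx t (hsub ht)).mono hsub)
    (fun t ht => (hf _ (natCast_div_mem_Icc hm.le) t (hsub ht)).trans <| by
      calc A * |t - m / L| = A * (t - m / L) := by rw [abs_of_nonneg (sub_nonneg.2 ht.1)]
        _ ≤ A * (((m + 1 : ℕ) : ℝ) / L - m / L) := by gcongr; exact ht.2
        _ = A / L := by rw [hgrid, div_eq_mul_inv])
  rw [hgrid] at this
  convert this using 1; field_simp

end VectorODE

section EulerScheme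

variable {V : Type*} [NormedAddCommGroup V] [NormedSpace ℝ V]
  {F : ℝ → V → V} {x : ℝ → V} {e : ℕ → V} {L : ℕ}

theorem norm_euler_le {c : ℝ} (hc : 0 ≤ c)
    (he : ∀ m, e (m + 1) = e m + (L : ℝ)⁻¹ • F (m / L) (e m))
    (hF : ∀ t ∈ Icc (0 : ℝ) 1, ∀ y, ‖F t y‖ ≤ c * ‖y‖) {m : ℕ} (hm : m ≤ L) :
    ‖e m‖ ≤ exp c * ‖e 0‖ := by
  have hstep : ∀ k < L, ‖e (k + 1)‖ ≤ (1 + c / L) * ‖e k‖ + 0 := by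
    intro k hk
    calc ‖e (k + 1)‖ ≤ ‖e k‖ + (L : ℝ)⁻¹ * (c * ‖e k‖) := by
          rw [he]
          refine (norm_add_le _ _).trans ?_
          rw [norm_smul, Real.norm_of_nonneg (by positivity)]
          gcongr
          exact hF _ (natCast_div_mem_Icc hk.le) _
      _ = (1 + c / L) * ‖e k‖ + 0 := by ring
  have := discrete_gronwall_of_lt (fun _ => norm_nonneg _) hstep (by positivity) le_rfl hm
  calc ‖e m‖ ≤ ‖e 0‖ * exp ((m / L) * c) := by simpa [mul_div_assoc', div_mul_eq_mul_div] using this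
    _ ≤ exp c * ‖e 0‖ := by
      rw [mul_comm]; gcongr
      exact mul_le_of_le_one_left hc (natCast_div_mem_Icc hm).2

theorem norm_euler_sub_le {A Lx : ℝ} (hA : 0 ≤ A) (hLx : 0 ≤ Lx)
    (hx : ∀ t ∈ Icc (0 : ℝ) 1, HasDerivWithinAt x (F t (x t)) (Icc 0 1) t)
    (hxt : ∀ s ∈ Icc (0 : ℝ) 1, ∀ t ∈ Icc (0 : ℝ) 1, ‖F t (x t) - F s (x s)‖ ≤ A * |t - s|)
    (hFe : ∀ m < L, ‖F (m / L) (e m) - F (m / L) (x (m / L))‖ ≤ Lx * ‖e m - x (m / L)‖)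
    (he0 : e 0 = x 0) (he : ∀ m, e (m + 1) = e m + (L : ℝ)⁻¹ • F (m / L) (e m))
    {l : ℕ} (hl : l ≤ L) : ‖e l - x (l / L)‖ ≤ A * exp Lx / L := by
  have htrunc := norm_euler_local_error_le (f := fun t => F t (x t)) hA hx hxt
  have hstep : ∀ m < L, ‖e (m + 1) - x ((m + 1 : ℕ) / L)‖
      ≤ (1 + Lx / L) * ‖e m - x (m / L)‖ + A / L ^ 2 := by
    intro m hm
    have hsplit : e (m + 1) - x ((m + 1 : ℕ) / L) = (e m - x (m / L))
        + (L : ℝ)⁻¹ • (F (m / L) (e m) - F (m / L) (x (m / L)))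
        - (x ((m + 1 : ℕ) / L) - x (m / L) - (L : ℝ)⁻¹ • F (m / L) (x (m / L))) := by
      rw [he]; module
    rw [hsplit]
    calc _ ≤ ‖e m - x (m / L)‖ + (L : ℝ)⁻¹ * (Lx * ‖e m - x (m / L)‖) + A / L ^ 2 := by
          refine (norm_sub_le _ _).trans (add_le_add ((norm_add_le _ _).trans ?_) (htrunc hm))
          rw [norm_smul, Real.norm_of_nonneg (by positivity)]
          gcongr; exact hFe m hm
      _ = (1 + Lx / L) * ‖e m - x (m / L)‖ + A / L ^ 2 := by ring
  have := discrete_gronwall_of_lt (u := fun m => ‖e m - x (m / L)‖) (fun _ => norm_nonneg _)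
    hstep (by positivity) (by positivity) hl
  have hlL := natCast_div_mem_Icc hl
  calc ‖e l - x (l / L)‖ ≤ (l / L) * (A / L) * exp ((l / L) * Lx) := by
        convert this using 2
        · simp only [he0, CharP.cast_eq_zero, zero_div, sub_self, norm_zero, zero_add]
          field_simp
        · field_simp
    _ ≤ 1 * (A / L) * exp (1 * Lx) := by gcongr <;> exact hlL.2
    _ = A * exp Lx / L := by rw [one_mul, one_mul]; ring

theorem norm_euler_sub_le_of_lipschitz {c Lx Ct R : ℝ} (hc : 0 ≤ c) (hLx : 0 ≤ Lx) (hCt : 0 ≤ Ct)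
    (hgrowth : ∀ t ∈ Icc (0 : ℝ) 1, ∀ y, ‖F t y‖ ≤ c * ‖y‖)
    (hlip : ∀ t ∈ Icc (0 : ℝ) 1, ∀ y z, ‖y‖ ≤ R → ‖z‖ ≤ R → ‖F t y - F t z‖ ≤ Lx * ‖y - z‖)
    (htime : ∀ s ∈ Icc (0 : ℝ) 1, ∀ t ∈ Icc (0 : ℝ) 1, ∀ y, ‖y‖ ≤ R →
      ‖F t y - F s y‖ ≤ Ct * |t - s|)
    (hR : exp c * ‖x 0‖ ≤ R) (hx : ∀ t ∈ Icc (0 : ℝ) 1, HasDerivWithinAt x (F t (x t)) (Icc 0 1) t)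
    (he0 : e 0 = x 0) (he : ∀ m, e (m + 1) = e m + (L : ℝ)⁻¹ • F (m / L) (e m))
    {l : ℕ} (hl : l ≤ L) : ‖e l - x (l / L)‖ ≤ (Lx * (c * R) + Ct) * exp Lx / L := by
  have hR0 : 0 ≤ R := (by positivity : 0 ≤ exp c * ‖x 0‖).trans hR
  have hxR : ∀ t ∈ Icc (0 : ℝ) 1, ‖x t‖ ≤ R := fun t ht =>
    (norm_le_exp_mul_of_hasDerivWithinAt hx (fun t ht => hgrowth t ht _) hc ht).trans hR
  have heR : ∀ m ≤ L, ‖e m‖ ≤ R := fun m hm =>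
    (norm_euler_le hc he hgrowth hm).trans (he0 ▸ hR)
  have hxlip : ∀ s ∈ Icc (0 : ℝ) 1, ∀ t ∈ Icc (0 : ℝ) 1, ‖x t - x s‖ ≤ c * R * |t - s| :=
    fun s hs t ht => by
      simpa [Real.norm_eq_abs] using (convex_Icc 0 1).norm_image_sub_le_of_norm_hasDerivWithin_le
        hx (fun u hu => (hgrowth u hu _).trans (by gcongr; exact hxR u hu)) hs ht
  refine norm_euler_sub_le (by positivity) hLx hx (fun s hs t ht => ?_)
    (fun m hm => hlip _ (natCast_div_mem_Icc hm.le) _ _ (heR m hm.le)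
      (hxR _ (natCast_div_mem_Icc hm.le))) he0 he hl
  calc ‖F t (x t) - F s (x s)‖ ≤ ‖F t (x t) - F t (x s)‖ + ‖F t (x s) - F s (x s)‖ :=
        norm_sub_le_norm_sub_add_norm_sub _ _ _
    _ ≤ Lx * (c * R * |t - s|) + Ct * |t - s| :=
        add_le_add ((hlip t ht _ _ (hxR t ht) (hxR s hs)).trans (by gcongr; exact hxlip s hs t ht))
          (htime s hs t ht _ (hxR s hs))
    _ = (Lx * (c * R) + Ct) * |t - s| := by ring

end EulerScheme

section BoundedLipschitz

open scoped NNReal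

variable {α : Type*} [PseudoMetricSpace α] [MeasurableSpace α] {ρ : ℝ → Measure α} {Cρ : ℝ}
  {U : Set α} {s t : ℝ}

theorem BLLipschitz.abs_integral_sub_le (hρ : BLLipschitz ρ Cρ)
    (hU : ∀ u ∈ Icc (0 : ℝ) 1, ∀ᵐ x ∂ρ u, x ∈ U) {φ : α → ℝ} {S : ℝ≥0}
    (hφb : ∀ x ∈ U, |φ x| ≤ S) (hφ : LipschitzOnWith S φ U)
    (hs : s ∈ Icc (0 : ℝ) 1) (ht : t ∈ Icc (0 : ℝ) 1) :
    |∫ x, φ x ∂ρ t - ∫ x, φ x ∂ρ s| ≤ S * Cρ * |t - s| := by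
  rcases eq_or_ne S 0 with rfl | hS
  · have hzero : ∀ u ∈ Icc (0 : ℝ) 1, ∫ x, φ x ∂ρ u = 0 := fun u hu =>
      integral_eq_zero_of_ae <| (hU u hu).mono fun x hx =>
        abs_nonpos_iff.1 (by simpa using hφb x hx)
    simp [hzero t ht, hzero s hs]
  have hS₀ : (0 : ℝ) < S := by positivity
  obtain ⟨ψ, hψ, hφψ⟩ := hφ.extend_real
  -- clamping a Lipschitz extension of `φ` to `[-S, S]` and dividing by `S` gives a test function
  have hSS : -(S : ℝ) ≤ S := neg_le_self S.coe_nonneg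
  let χ : α → ℝ := fun x => (S : ℝ)⁻¹ * projIcc (-S : ℝ) S hSS (ψ x)
  have hχb : ∀ x, |χ x| ≤ 1 := fun x => by
    rw [abs_mul, abs_inv, NNReal.abs_eq, inv_mul_le_iff₀ hS₀, mul_one]
    exact abs_le.2 (projIcc (-(S : ℝ)) S hSS (ψ x)).2
  have hχ : LipschitzWith 1 χ := by
    have := (lipschitzWith_smul (S : ℝ)⁻¹).comp
      (LipschitzWith.subtype_val _ |>.comp ((LipschitzWith.projIcc hSS).comp hψ))
    rwa [one_mul, one_mul, nnnorm_inv, NNReal.nnnorm_eq,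
      inv_mul_cancel₀ hS] at this
  have hint : ∀ u ∈ Icc (0 : ℝ) 1, ∫ x, χ x ∂ρ u = (S : ℝ)⁻¹ * ∫ x, φ x ∂ρ u := fun u hu => by
    rw [← integral_const_mul]
    refine integral_congr_ae ((hU u hu).mono fun x hx => ?_)
    simp [χ, ← hφψ hx, projIcc_of_mem _ (abs_le.1 (hφb x hx))]
  have := hρ χ hχb hχ s hs t ht
  rw [hint t ht, hint s hs, ← mul_sub, abs_mul, abs_inv, NNReal.abs_eq, inv_mul_le_iff₀ hS₀] at this
  simpa [mul_assoc] using this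

theorem BLLipschitz.norm_integral_sub_le {E : Type*} [NormedAddCommGroup E]
    [InnerProductSpace ℝ E] [CompleteSpace E] (hρ : BLLipschitz ρ Cρ)
    (hU : ∀ u ∈ Icc (0 : ℝ) 1, ∀ᵐ x ∂ρ u, x ∈ U) {f : α → E} {S : ℝ≥0}
    (hf_int : ∀ u ∈ Icc (0 : ℝ) 1, Integrable f (ρ u))
    (hfb : ∀ x ∈ U, ‖f x‖ ≤ S) (hf : LipschitzOnWith S f U)
    (hs : s ∈ Icc (0 : ℝ) 1) (ht : t ∈ Icc (0 : ℝ) 1) :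
    ‖∫ x, f x ∂ρ t - ∫ x, f x ∂ρ s‖ ≤ S * Cρ * |t - s| := by
  set v := ∫ x, f x ∂ρ t - ∫ x, f x ∂ρ s
  -- test the scalar estimate against the direction of `v`
  set w := ‖v‖⁻¹ • v
  have hw : ‖w‖ ≤ 1 := by
    rw [norm_smul, norm_inv, norm_norm]
    exact inv_mul_le_one_of_le₀ le_rfl (norm_nonneg _)
  have hwv : inner ℝ w v = ‖v‖ := by
    rw [real_inner_smul_left, real_inner_self_eq_norm_sq]
    rcases eq_or_ne ‖v‖ 0 with h | h
    · simp [h]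
    · field_simp
  have hφb : ∀ x ∈ U, |inner ℝ w (f x)| ≤ S := fun x hx =>
    (abs_real_inner_le_norm _ _).trans <| by nlinarith [norm_nonneg w, norm_nonneg (f x), hfb x hx]
  have hφ : LipschitzOnWith S (fun x => inner ℝ w (f x)) U :=
    ((innerSL ℝ w).lipschitz.comp_lipschitzOnWith hf).weaken <| mul_le_of_le_one_left S.coe_nonneg
      (by rw [← NNReal.coe_le_coe, coe_nnnorm, innerSL_apply_norm]; exact hw)
  have := hρ.abs_integral_sub_le hU hφb hφ hs ht
  rwa [integral_inner (hf_int t ht), integral_inner (hf_int s hs), ← inner_sub_right, hwv,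
    abs_norm] at this

end BoundedLipschitz

section Columns

variable {D N : ℕ}

def matColCLM (j : Fin (N + 1)) : Mat D N →L[ℝ] EuclideanSpace ℝ (Fin D) :=
  LinearMap.toContinuousLinearMap
    { toFun := fun Z => matCol Z j
      map_add' := fun _ _ => rfl
      map_smul' := fun _ _ => rfl }

theorem matColCLM_apply (j : Fin (N + 1)) (Z : Mat D N) : matColCLM j Z = matCol Z j := rfl

theorem norm_sq_eq_sum_norm_matCol_sq (Z : Mat D N) : ‖Z‖ ^ 2 = ∑ j, ‖matCol Z j‖ ^ 2 := by
  simp only [EuclideanSpace.norm_sq_eq, Fintype.sum_prod_type]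
  exact Finset.sum_comm

theorem norm_matCol_le_colNorm (Z : Mat D N) (j : Fin (N + 1)) : ‖matCol Z j‖ ≤ colNorm Z :=
  le_ciSup (f := fun j => ‖matCol Z j‖) (Finite.bddAbove_range _) j

theorem colNorm_nonneg (Z : Mat D N) : 0 ≤ colNorm Z :=
  (norm_nonneg _).trans (norm_matCol_le_colNorm Z 0)

theorem colNorm_zero : colNorm (0 : Mat D N) = 0 := by
  simp [colNorm, ← matColCLM_apply]

theorem colNorm_le_norm (Z : Mat D N) : colNorm Z ≤ ‖Z‖ :=
  ciSup_le fun j => (pow_le_pow_iff_left₀ (norm_nonneg _) (norm_nonneg _) two_ne_zero).1 <| by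
    rw [norm_sq_eq_sum_norm_matCol_sq]
    exact Finset.single_le_sum (f := fun j => ‖matCol Z j‖ ^ 2) (fun _ _ => by positivity)
      (Finset.mem_univ j)

theorem norm_le_sqrt_mul_colNorm (Z : Mat D N) : ‖Z‖ ≤ √(N + 1) * colNorm Z := by
  rw [← Real.sqrt_sq (norm_nonneg Z), ← Real.sqrt_sq (colNorm_nonneg Z),
    ← Real.sqrt_mul (by positivity)]
  gcongr
  calc ‖Z‖ ^ 2 = ∑ j, ‖matCol Z j‖ ^ 2 := norm_sq_eq_sum_norm_matCol_sq Z
    _ ≤ ∑ _j : Fin (N + 1), colNorm Z ^ 2 := by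
      gcongr with j; exact norm_matCol_le_colNorm Z j
    _ = (N + 1) * colNorm Z ^ 2 := by simp

end Columns

section Transformer

variable {D N p : ℕ}

-- The hypotheses (G1), (G2), (G3) on `g`.
def ColGrowthBound (g : Mat D N → Par p → Mat D N) (K : ℝ) : Prop :=
  ∀ T β, colNorm (g T β) ≤ K * colNorm T * (1 + ‖β‖ + ‖β‖ ^ 2)

def ParamDerivBound (g : Mat D N → Par p → Mat D N) (φP : ℝ → ℝ) : Prop :=
  ∀ T β i, ‖fderiv ℝ (fun β' => matCol (g T β') i) β‖ ≤ φP (colNorm T) * (1 + ‖β‖)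

def StateDerivBound (g : Mat D N → Par p → Mat D N) (φT : ℝ → ℝ) : Prop :=
  ∀ T β, ‖fderiv ℝ (fun T' => g T' β) T‖ ≤ φT ‖T‖ * (1 + ‖β‖ + ‖β‖ ^ 2)

variable {g : Mat D N → Par p → Mat D N} {K r R : ℝ} {φP φT : ℝ → ℝ}

theorem ColGrowthBound.norm_le (hG1 : ColGrowthBound g K) (hK : 0 ≤ K) (A : Mat D N) {β : Par p}
    (hβ : ‖β‖ ≤ r) : ‖g A β‖ ≤ √(N + 1) * K * (1 + r + r ^ 2) * ‖A‖ :=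
  calc ‖g A β‖ ≤ √(N + 1) * colNorm (g A β) := norm_le_sqrt_mul_colNorm _
    _ ≤ √(N + 1) * (K * ‖A‖ * (1 + r + r ^ 2)) := by
      gcongr
      refine (hG1 A β).trans ?_
      have := colNorm_nonneg A
      gcongr
      exact colNorm_le_norm A
    _ = √(N + 1) * K * (1 + r + r ^ 2) * ‖A‖ := by ring

theorem StateDerivBound.nonneg (hG3 : StateDerivBound g φT) (hφT : Monotone φT) (hR : 0 ≤ R) :
    0 ≤ φT R := by
  have := (norm_nonneg _).trans (hG3 0 0)
  rw [norm_zero, norm_zero, zero_pow two_ne_zero, add_zero, add_zero, mul_one] at this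
  exact this.trans (hφT hR)

theorem ParamDerivBound.nonneg (hG2 : ParamDerivBound g φP) (hφP : Monotone φP) (hR : 0 ≤ R) :
    0 ≤ φP R := by
  have := (norm_nonneg _).trans (hG2 0 0 0)
  rw [colNorm_zero, norm_zero, add_zero, mul_one] at this
  exact this.trans (hφP hR)

theorem StateDerivBound.norm_sub_le (hG3 : StateDerivBound g φT) (hφT : Monotone φT)
    (hg : Differentiable ℝ fun z : Mat D N × Par p => g z.1 z.2) {A A' : Mat D N}
    (hA : ‖A‖ ≤ R) (hA' : ‖A'‖ ≤ R) {β : Par p} (hβ : ‖β‖ ≤ r) :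
    ‖g A β - g A' β‖ ≤ φT R * (1 + r + r ^ 2) * ‖A - A'‖ := by
  have hφR := hG3.nonneg hφT ((norm_nonneg A).trans hA)
  refine (convex_closedBall (0 : Mat D N) R).norm_image_sub_le_of_norm_fderiv_le
    (f := fun T => g T β)
    (fun T _ => (hg.comp (differentiable_id.prodMk (differentiable_const β))).differentiableAt)
    (fun T hT => (hG3 T β).trans ?_) (by simpa using hA') (by simpa using hA)
  rw [mem_closedBall_zero_iff] at hT
  have := hφT hT
  gcongr

theorem ParamDerivBound.norm_sub_le (hG2 : ParamDerivBound g φP) (hφP : Monotone φP)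
    (hg : Differentiable ℝ fun z : Mat D N × Par p => g z.1 z.2) {A : Mat D N}
    (hA : colNorm A ≤ R) {β β' : Par p} (hβ : ‖β‖ ≤ r) (hβ' : ‖β'‖ ≤ r) :
    ‖g A β - g A β'‖ ≤ √(N + 1) * (φP R * (1 + r)) * ‖β - β'‖ := by
  have hφR := hG2.nonneg hφP ((colNorm_nonneg A).trans hA)
  have hcol : ∀ j, ‖matCol (g A β - g A β') j‖ ≤ φP R * (1 + r) * ‖β - β'‖ := fun j => by
    rw [← matColCLM_apply, map_sub]
    refine (convex_closedBall (0 : Par p) r).norm_image_sub_le_of_norm_fderiv_le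
      (f := fun β => matColCLM j (g A β))
      (fun β _ => ((matColCLM j).differentiable.comp
        (hg.comp ((differentiable_const A).prodMk differentiable_id))).differentiableAt)
      (fun b hb => (hG2 A b j).trans ?_) (by simpa using hβ') (by simpa using hβ)
    rw [mem_closedBall_zero_iff] at hb
    have := hφP hA
    gcongr
  calc ‖g A β - g A β'‖ ≤ √(N + 1) * colNorm (g A β - g A β') := norm_le_sqrt_mul_colNorm _
    _ ≤ √(N + 1) * (φP R * (1 + r) * ‖β - β'‖) := by gcongr; exact ciSup_le hcol
    _ = √(N + 1) * (φP R * (1 + r)) * ‖β - β'‖ := by ring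

end Transformer

section MeanField

variable {D N p : ℕ} {g : Mat D N → Par p → Mat D N} {K r R : ℝ} {φP φT : ℝ → ℝ}
  {μ : Measure (Par p)}

theorem ColGrowthBound.integrable [IsFiniteMeasure μ] (hG1 : ColGrowthBound g K) (hK : 0 ≤ K)
    (hg : Differentiable ℝ fun z : Mat D N × Par p => g z.1 z.2) (hμ : ∀ᵐ β ∂μ, ‖β‖ ≤ r)
    (A : Mat D N) : Integrable (g A) μ :=
  .of_bound (hg.continuous.comp (continuous_const.prodMk continuous_id)).aestronglyMeasurable _
    (hμ.mono fun _ hβ => hG1.norm_le hK A hβ)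

theorem ColGrowthBound.norm_integral_le [IsProbabilityMeasure μ] (hG1 : ColGrowthBound g K)
    (hK : 0 ≤ K) (hμ : ∀ᵐ β ∂μ, ‖β‖ ≤ r) (A : Mat D N) :
    ‖∫ β, g A β ∂μ‖ ≤ √(N + 1) * K * (1 + r + r ^ 2) * ‖A‖ := by
  simpa using norm_integral_le_of_norm_le_const (hμ.mono fun _ hβ => hG1.norm_le hK A hβ)

theorem StateDerivBound.norm_integral_sub_le [IsProbabilityMeasure μ]
    (hG3 : StateDerivBound g φT) (hφT : Monotone φT) (hG1 : ColGrowthBound g K) (hK : 0 ≤ K)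
    (hg : Differentiable ℝ fun z : Mat D N × Par p => g z.1 z.2) (hμ : ∀ᵐ β ∂μ, ‖β‖ ≤ r)
    {A A' : Mat D N} (hA : ‖A‖ ≤ R) (hA' : ‖A'‖ ≤ R) :
    ‖∫ β, g A β ∂μ - ∫ β, g A' β ∂μ‖ ≤ φT R * (1 + r + r ^ 2) * ‖A - A'‖ := by
  rw [← integral_sub (hG1.integrable hK hg hμ A) (hG1.integrable hK hg hμ A')]
  simpa using norm_integral_le_of_norm_le_const
    (hμ.mono fun _ hβ => hG3.norm_sub_le hφT hg hA hA' hβ)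

theorem BLLipschitz.norm_integral_sub_le_of_paramDerivBound {ρ : ℝ → Measure (Par p)} {Cρ : ℝ}
    [∀ t, IsProbabilityMeasure (ρ t)] (hρ : BLLipschitz ρ Cρ) (hr : 0 ≤ r)
    (hsupp : ∀ u ∈ Icc (0 : ℝ) 1, ∀ᵐ β ∂ρ u, ‖β‖ ≤ r)
    (hG1 : ColGrowthBound g K) (hK : 0 ≤ K) (hG2 : ParamDerivBound g φP) (hφP : Monotone φP)
    (hg : Differentiable ℝ fun z : Mat D N × Par p => g z.1 z.2) {A : Mat D N} (hA : ‖A‖ ≤ R)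
    {s t : ℝ} (hs : s ∈ Icc (0 : ℝ) 1) (ht : t ∈ Icc (0 : ℝ) 1) :
    ‖∫ β, g A β ∂ρ t - ∫ β, g A β ∂ρ s‖ ≤
      max (√(N + 1) * K * (1 + r + r ^ 2) * R) (√(N + 1) * (φP R * (1 + r))) * Cρ * |t - s| := by
  have hR : 0 ≤ R := (norm_nonneg A).trans hA
  let S : NNReal := ⟨max (√(N + 1) * K * (1 + r + r ^ 2) * R) (√(N + 1) * (φP R * (1 + r))),
    le_max_of_le_left (by positivity)⟩
  have hfb : ∀ β ∈ Metric.closedBall (0 : Par p) r, ‖g A β‖ ≤ S := fun β hβ =>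
    (hG1.norm_le hK A (mem_closedBall_zero_iff.1 hβ)).trans (le_max_of_le_left (by gcongr))
  have hf : LipschitzOnWith S (g A) (Metric.closedBall 0 r) :=
    .of_dist_le_mul fun β hβ β' hβ' => by
      rw [dist_eq_norm, dist_eq_norm]
      refine (hG2.norm_sub_le hφP hg ((colNorm_le_norm A).trans hA)
        (mem_closedBall_zero_iff.1 hβ) (mem_closedBall_zero_iff.1 hβ')).trans ?_
      exact mul_le_mul_of_nonneg_right (le_max_right _ _) (norm_nonneg _)
  exact hρ.norm_integral_sub_le (fun u hu => (hsupp u hu).mono fun _ => mem_closedBall_zero_iff.2)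
    (fun u hu => hG1.integrable hK hg (hsupp u hu) A) hfb hf hs ht

end MeanField

/-- first-order `O(1/L)` convergence of the explicit Euler scheme, assuming
only bounded-Lipschitz continuity of `t ↦ ρ_t`. -/
theorem stmt14 (D N p : ℕ) (g : Mat D N → Par p → Mat D N)
    (K r Cρ B : ℝ) (φP φT : ℝ → ℝ)
    (hK : 0 < K) (hr : 0 < r) (hCρ : 0 ≤ Cρ) (hB : 0 < B)
    (hgdiff : Differentiable ℝ fun z : Mat D N × Par p => g z.1 z.2)
    (hφP : Continuous φP ∧ Monotone φP) (hφT : Continuous φT ∧ Monotone φT)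
    (hG1 : ∀ (T : Mat D N) (β : Par p),
      colNorm (g T β) ≤ K * colNorm T * (1 + ‖β‖ + ‖β‖ ^ 2))
    (hG2 : ∀ (T : Mat D N) (β : Par p) (i : Fin (N + 1)),
      ‖fderiv ℝ (fun β' => matCol (g T β') i) β‖ ≤ φP (colNorm T) * (1 + ‖β‖))
    (hG3 : ∀ (T : Mat D N) (β : Par p),
      ‖fderiv ℝ (fun T' => g T' β) T‖ ≤ φT ‖T‖ * (1 + ‖β‖ + ‖β‖ ^ 2)) :
    ∃ C : ℝ, 0 < C ∧
      ∀ (ρ : ℝ → Measure (Par p)) [∀ t, IsProbabilityMeasure (ρ t)],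
        (∀ t ∈ Icc (0 : ℝ) 1, ρ t {β : Par p | r < ‖β‖} = 0) →
        BLLipschitz ρ Cρ →
        ∀ H : Mat D N, colNorm H ≤ B →
        ∀ T : ℝ → Mat D N, T 0 = H →
          (∀ t ∈ Icc (0 : ℝ) 1,
            HasDerivWithinAt T (∫ β, g (T t) β ∂(ρ t)) (Icc (0 : ℝ) 1) t) →
          ∀ L : ℕ, 0 < L → ∀ l ≤ L,
            ‖eulerT g ρ L H l - T ((l : ℝ) / L)‖ ≤ C / L := by
  set M := 1 + r + r ^ 2
  set c := √(N + 1) * K * M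
  set R := exp c * (√(N + 1) * B)
  have hφTR := StateDerivBound.nonneg hG3 hφT.2 (R := R) (by positivity)
  set Lx := φT R * M
  set Ct := max (c * R) (√(N + 1) * (φP R * (1 + r))) * Cρ
  refine ⟨(Lx * (c * R) + Ct) * exp Lx + 1, by positivity, ?_⟩
  intro ρ _ hsupp hBL H hH T hT0 hT L _ l hl
  have hρ : ∀ t ∈ Icc (0 : ℝ) 1, ∀ᵐ β ∂ρ t, ‖β‖ ≤ r := fun t ht =>
    (measure_eq_zero_iff_ae_notMem.1 (hsupp t ht)).mono fun _ hβ => not_lt.1 hβ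
  have hR : exp c * ‖T 0‖ ≤ R := by
    rw [hT0]
    exact mul_le_mul_of_nonneg_left ((norm_le_sqrt_mul_colNorm H).trans (by gcongr)) (exp_pos c).le
  calc ‖eulerT g ρ L H l - T (l / L)‖ ≤ (Lx * (c * R) + Ct) * exp Lx / L :=
        norm_euler_sub_le_of_lipschitz (F := fun t A => ∫ β, g A β ∂ρ t)
          (by positivity) (by positivity) (by positivity)
          (fun t ht A => ColGrowthBound.norm_integral_le hG1 hK.le (hρ t ht) A)
          (fun t ht A A' hA hA' =>
            StateDerivBound.norm_integral_sub_le hG3 hφT.2 hG1 hK.le hgdiff (hρ t ht) hA hA')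
          (fun s hs t ht A hA => hBL.norm_integral_sub_le_of_paramDerivBound hr.le hρ hG1 hK.le
            hG2 hφP.2 hgdiff hA hs ht)
          hR hT hT0.symm (fun _ => rfl) hl
    _ ≤ ((Lx * (c * R) + Ct) * exp Lx + 1) / L := by gcongr; linarith
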